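/- arXiv:2103.11876 — 6 statements merged into one kernel-verified Lean document; each statement's English description precedes it below -/
import Mathlib

section
/- For all positive integers p and r, Σ_{n=1}^∞ h_n^{(-r)}/n^p = ζ(p+1) + Σ_{k=1}^r (-1)^k C(r,k) { H_k/k^p + Σ_{j=2}^p (H_k^{(j)} - ζ(j)) / k^{p+1-j} }. -/
open Finset

/-- Generalized harmonic number `H_n^(r) = ∑_{k=1}^n 1/k^r`. -/
noncomputable def Hgen (r n : ℕ) : ℝ := ∑ k ∈ Finset.Icc 1 n, (1 : ℝ) / (k : ℝ) ^ r

/-- Hyperharmonic numbers of non-negative order: `hpos 0 n = 1/n`,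
`hpos (r+1) n = ∑_{k=1}^n hpos r k`.  In particular `hpos 1 n = H_n`. -/
noncomputable def hpos : ℕ → ℕ → ℝ
  | 0, n => 1 / (n : ℝ)
  | r + 1, n => ∑ k ∈ Finset.Icc 1 n, hpos r k

/-- Hyperharmonic numbers of negative order: `hneg r n = h_n^(-r)` for `r ≥ 1`. -/
noncomputable def hneg (r n : ℕ) : ℝ :=
  if r < n then (-1 : ℝ) ^ r / (((n - r : ℕ) : ℝ) * (Nat.choose n r : ℝ))
  else ∑ k ∈ Finset.range n, (Nat.choose r k : ℝ) * (-1 : ℝ) ^ k / ((n - k : ℕ) : ℝ)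

/-- Hyperharmonic numbers of arbitrary integer order. -/
noncomputable def hh (r : ℤ) (n : ℕ) : ℝ :=
  if 0 ≤ r then hpos r.toNat n else hneg (-r).toNat n

/-- Riemann zeta value `ζ(k) = ∑_{n=1}^∞ 1/n^k`. -/
noncomputable def zetaVal (k : ℕ) : ℝ := ∑' n : ℕ, 1 / ((n : ℝ) + 1) ^ k

/-- Linear Euler sum `ζ_{H^(s)}(t) = ∑_{n=1}^∞ H_n^(s)/n^t`. -/
noncomputable def eulerSum (s t : ℕ) : ℝ := ∑' n : ℕ, Hgen s (n + 1) / ((n : ℝ) + 1) ^ t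

/-- The set of Riemann zeta values `ζ(k)`, `k ≥ 2`. -/
def zetaSet : Set ℝ := {x | ∃ k : ℕ, 2 ≤ k ∧ x = zetaVal k}

/-- The set of Riemann zeta values together with linear Euler sums. -/
def zetaEulerSet : Set ℝ :=
  zetaSet ∪ {x | ∃ s t : ℕ, 1 ≤ s ∧ 2 ≤ t ∧ x = eulerSum s t}

open Filter Topology fwdDiff
open scoped Nat

/-!
Expanding `h_n^{(-r)}` as the finite alternating sum `∑_{k ≤ r} (-1)^k C(r,k) / (n - k)` (a
backward difference of `1/x`, whose closed form gives the definition for `n > r`) and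
interchanging the finite sum with the series, the left side becomes `∑_{k ≤ r} (-1)^k C(r,k) F_k(p)`
with `F_k(p) = ∑_{m ≥ 1} 1 / (m (m + k)^p)` (`shiftedZeta k p`). Here `F_0(p) = ζ(p + 1)`,
while for `k ≥ 1` the partial fraction
`1 / (m (m + k)^{p+1}) = (1 / (m (m + k)^p) - 1 / (m + k)^{p+1}) / k` gives the recursion
`F_k(p + 1) = (F_k(p) - ζ(p + 1) + H_k^{(p+1)}) / k`, started by the telescoping value
`F_k(1) = H_k / k`.
-/

lemma fwdDiff_neg_one_iter_one_div (r : ℕ) {x : ℝ} (hx : (descPochhammer ℝ (r + 1)).eval x ≠ 0) :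
    (Δ_[-1])^[r] (fun y : ℝ => 1 / y) x = r ! / (descPochhammer ℝ (r + 1)).eval x := by
  induction r generalizing x with
  | zero => simp
  | succ r ih =>
    have hleft : (descPochhammer ℝ (r + 2)).eval x =
        x * (descPochhammer ℝ (r + 1)).eval (x - 1) := by
      rw [descPochhammer_succ_left]; simp
    have hright : (descPochhammer ℝ (r + 2)).eval x =
        (descPochhammer ℝ (r + 1)).eval x * (x - (r + 1)) := by
      rw [descPochhammer_succ_eval]; push_cast; ring
    have h₁ : (descPochhammer ℝ (r + 1)).eval (x - 1) ≠ 0 := right_ne_zero_of_mul (hleft ▸ hx)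
    have h₂ : (descPochhammer ℝ (r + 1)).eval x ≠ 0 := left_ne_zero_of_mul (hright ▸ hx)
    rw [Function.iterate_succ_apply', fwdDiff, ← sub_eq_add_neg, ih h₁, ih h₂,
      div_sub_div _ _ h₁ h₂, div_eq_div_iff (mul_ne_zero h₁ h₂) hx, Nat.factorial_succ]
    push_cast
    linear_combination (r ! * (descPochhammer ℝ (r + 1)).eval x) * hleft
      - (r ! * (descPochhammer ℝ (r + 1)).eval (x - 1)) * hright

lemma sum_choose_mul_neg_one_pow_div_sub {r n : ℕ} (h : r < n) :
    ∑ k ∈ range (r + 1), (r.choose k : ℝ) * (-1) ^ k / ((n - k : ℕ) : ℝ) =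
      (-1) ^ r / (((n - r : ℕ) : ℝ) * (n.choose r : ℝ)) := by
  have hpoch : (descPochhammer ℝ (r + 1)).eval (n : ℝ) = ((n - r : ℕ) : ℝ) * r ! * n.choose r := by
    rw [descPochhammer_eval_eq_descFactorial, Nat.descFactorial_succ,
      Nat.descFactorial_eq_factorial_mul_choose]
    push_cast; ring
  have hne : (descPochhammer ℝ (r + 1)).eval (n : ℝ) ≠ 0 := by
    rw [hpoch]
    have : 0 < n - r := by omega
    have := Nat.choose_pos h.le
    positivity
  have hdiff := fwdDiff_iter_eq_sum_shift (-1 : ℝ) (fun y : ℝ => 1 / y) r n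
  rw [fwdDiff_neg_one_iter_one_div r hne, hpoch] at hdiff
  have hterm : ∀ k ∈ range (r + 1),
      ((-1 : ℤ) ^ (r - k) * (r.choose k : ℤ)) • (1 / ((n : ℝ) + k • (-1 : ℝ))) =
        (-1) ^ r * ((r.choose k : ℝ) * (-1) ^ k / ((n - k : ℕ) : ℝ)) := by
    intro k hk
    obtain ⟨d, rfl⟩ := Nat.exists_eq_add_of_le (Nat.lt_succ_iff.mp (mem_range.mp hk))
    have hsq : ((-1 : ℝ) ^ k) * (-1) ^ k = 1 := by rw [← mul_pow]; simp
    rw [Nat.add_sub_cancel_left, Nat.cast_sub (by omega), zsmul_eq_mul, nsmul_eq_mul]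
    push_cast
    linear_combination (-(-1 : ℝ) ^ d * (k + d).choose k / ((n : ℝ) - k)) * hsq
  rw [sum_congr rfl hterm, ← mul_sum] at hdiff
  have hsq : ((-1 : ℝ) ^ r) * (-1) ^ r = 1 := by rw [← mul_pow]; simp
  have hr : (r ! : ℝ) ≠ 0 := by positivity
  calc _ = (-1) ^ r *
        ((-1) ^ r * ∑ k ∈ range (r + 1), (r.choose k : ℝ) * (-1) ^ k / ((n - k : ℕ) : ℝ)) := by
        rw [← mul_assoc, hsq, one_mul]
    _ = _ := by rw [← hdiff]; field_simp

/-- Valid for every `n`: the terms with `k ≥ n` have truncated denominator `0`, so `1 / 0 = 0`,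
and those with `k > r` have `C(r, k) = 0`. -/
lemma hneg_eq_sum_range (r n : ℕ) :
    hneg r n = ∑ k ∈ range (r + 1), (r.choose k : ℝ) * (-1) ^ k / ((n - k : ℕ) : ℝ) := by
  unfold hneg
  split_ifs with h
  · exact (sum_choose_mul_neg_one_pow_div_sub h).symm
  · refine sum_subset (range_subset_range.2 (by omega)) fun k _ hk => ?_
    rw [mem_range, not_lt, ← Nat.sub_eq_zero_iff_le] at hk
    simp [hk]

lemma hasSum_sub_comp_add_of_antitone {f : ℕ → ℝ} (hf : Antitone f)
    (hlim : Tendsto f atTop (𝓝 0)) (k : ℕ) :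
    HasSum (fun m => f m - f (m + k)) (∑ i ∈ range k, f i) := by
  induction k with
  | zero => simp [hasSum_zero]
  | succ k ih =>
    have hstep : HasSum (fun m => f (m + k) - f (m + k + 1)) (f k) := by
      rw [hasSum_iff_tendsto_nat_of_nonneg fun m => sub_nonneg.2 (hf (by omega))]
      have hpartial : ∀ N, ∑ m ∈ range N, (f (m + k) - f (m + k + 1)) = f k - f (N + k) := by
        intro N
        simpa [add_right_comm] using sum_range_sub' (fun m => f (m + k)) N
      simp only [hpartial]
      simpa using (tendsto_const_nhds (x := f k)).sub (hlim.comp (tendsto_add_atTop_nat k))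
    simpa [sum_range_succ, ← add_assoc] using ih.add hstep

lemma summable_one_div_add_one_pow {j : ℕ} (hj : 2 ≤ j) :
    Summable (fun n : ℕ => 1 / ((n : ℝ) + 1) ^ j) := by
  refine ((summable_nat_add_iff 1).2 (Real.summable_one_div_nat_pow.2 hj)).congr fun n => ?_
  push_cast; rfl

lemma Hgen_eq_sum_range (j k : ℕ) : Hgen j k = ∑ i ∈ range k, 1 / ((i : ℝ) + 1) ^ j := by
  induction k with
  | zero => simp [Hgen]
  | succ k ih => rw [Hgen, sum_Icc_succ_top (by omega), ← Hgen, ih, sum_range_succ]; push_cast; rfl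

lemma summable_one_div_add_pow {j : ℕ} (hj : 2 ≤ j) (k : ℕ) :
    Summable (fun m : ℕ => 1 / ((m : ℝ) + k + 1) ^ j) :=
  ((summable_nat_add_iff k).2 (summable_one_div_add_one_pow hj)).congr fun m => by push_cast; ring

lemma tsum_one_div_add_pow {j : ℕ} (hj : 2 ≤ j) (k : ℕ) :
    ∑' m : ℕ, 1 / ((m : ℝ) + k + 1) ^ j = zetaVal j - Hgen j k := by
  rw [zetaVal, Hgen_eq_sum_range, ← (summable_one_div_add_one_pow hj).sum_add_tsum_nat_add k,
    add_sub_cancel_left]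
  exact tsum_congr fun m => by push_cast; ring

noncomputable def shiftedZeta (k p : ℕ) : ℝ :=
  ∑' m : ℕ, 1 / (((m : ℝ) + 1) * ((m : ℝ) + k + 1) ^ p)

lemma summable_shiftedZeta (k : ℕ) {p : ℕ} (hp : 1 ≤ p) :
    Summable (fun m : ℕ => 1 / (((m : ℝ) + 1) * ((m : ℝ) + k + 1) ^ p)) := by
  refine (summable_one_div_add_one_pow le_rfl).of_nonneg_of_le (fun m => by positivity) fun m => ?_
  have hm : (0 : ℝ) ≤ m := m.cast_nonneg
  have hk : (0 : ℝ) ≤ k := k.cast_nonneg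
  have hle : (m : ℝ) + 1 ≤ ((m : ℝ) + k + 1) ^ p := calc
    (m : ℝ) + 1 ≤ m + k + 1 := by linarith
    _ ≤ _ := le_self_pow₀ (by linarith) (by omega)
  gcongr
  rw [sq]
  gcongr

lemma shiftedZeta_zero (p : ℕ) : shiftedZeta 0 p = zetaVal (p + 1) := by
  simp [shiftedZeta, zetaVal, pow_succ']

lemma shiftedZeta_one {k : ℕ} (hk : k ≠ 0) : shiftedZeta k 1 = Hgen 1 k / k := by
  have hk' : (k : ℝ) ≠ 0 := by exact_mod_cast hk
  have hanti : Antitone fun m : ℕ => 1 / ((m : ℝ) + 1) := fun a b hab => by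
    dsimp only
    gcongr
  have htel := hasSum_sub_comp_add_of_antitone hanti tendsto_one_div_add_atTop_nhds_zero_nat k
  have hsplit : ∀ m : ℕ, 1 / (((m : ℝ) + 1) * ((m : ℝ) + k + 1) ^ 1) =
      (1 / ((m : ℝ) + 1) - 1 / (((m + k : ℕ) : ℝ) + 1)) / k := by
    intro m
    push_cast
    field_simp
    ring
  rw [shiftedZeta, tsum_congr hsplit, tsum_div_const, htel.tsum_eq, Hgen_eq_sum_range]
  simp

lemma shiftedZeta_succ {k p : ℕ} (hk : k ≠ 0) (hp : 1 ≤ p) :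
    shiftedZeta k (p + 1) = (shiftedZeta k p - (zetaVal (p + 1) - Hgen (p + 1) k)) / k := by
  have hk' : (k : ℝ) ≠ 0 := by exact_mod_cast hk
  have hsplit : ∀ m : ℕ, 1 / (((m : ℝ) + 1) * ((m : ℝ) + k + 1) ^ (p + 1)) =
      (1 / (((m : ℝ) + 1) * ((m : ℝ) + k + 1) ^ p) - 1 / ((m : ℝ) + k + 1) ^ (p + 1)) / k := by
    intro m
    field_simp
    ring
  rw [shiftedZeta, tsum_congr hsplit, tsum_div_const,
    (summable_shiftedZeta k hp).tsum_sub (summable_one_div_add_pow (by omega) k),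
    tsum_one_div_add_pow (by omega), shiftedZeta]

lemma shiftedZeta_eq {k p : ℕ} (hk : k ≠ 0) (hp : 1 ≤ p) :
    shiftedZeta k p = Hgen 1 k / (k : ℝ) ^ p +
      ∑ j ∈ Icc 2 p, (Hgen j k - zetaVal j) / (k : ℝ) ^ (p + 1 - j) := by
  induction p, hp using Nat.le_induction with
  | base => simp [shiftedZeta_one hk]
  | succ p hp ih =>
    have hk' : (k : ℝ) ≠ 0 := by exact_mod_cast hk
    have hshift : ∑ j ∈ Icc 2 p, (Hgen j k - zetaVal j) / (k : ℝ) ^ (p + 1 + 1 - j) =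
        (∑ j ∈ Icc 2 p, (Hgen j k - zetaVal j) / (k : ℝ) ^ (p + 1 - j)) / k := by
      rw [sum_div]
      refine sum_congr rfl fun j hj => ?_
      rw [Nat.sub_add_comm (by simp at hj; omega), pow_succ, div_div]
    rw [shiftedZeta_succ hk hp, ih, sum_Icc_succ_top (by omega), hshift, Nat.add_sub_cancel_left]
    field_simp
    ring

/-- The first `k` terms vanish: `n + 1 - k` truncates to `0` and `1 / 0 = 0`. -/
lemma hasSum_shiftedZeta_truncSub (k : ℕ) {p : ℕ} (hp : 1 ≤ p) :
    HasSum (fun n : ℕ => 1 / (((n + 1 - k : ℕ) : ℝ) * ((n + 1 : ℕ) : ℝ) ^ p))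
      (shiftedZeta k p) := by
  rw [← hasSum_nat_add_iff' k]
  have hhead : ∑ n ∈ range k, 1 / (((n + 1 - k : ℕ) : ℝ) * ((n + 1 : ℕ) : ℝ) ^ p) = 0 :=
    sum_eq_zero fun n hn => by simp [Nat.sub_eq_zero_of_le (mem_range.mp hn)]
  rw [hhead, sub_zero]
  refine ((summable_shiftedZeta k hp).hasSum).congr_fun fun m => ?_
  rw [show m + k + 1 - k = m + 1 by omega]
  push_cast
  ring

theorem stmt2_general (p r : ℕ) (hp : 1 ≤ p) :
    (∑' n : ℕ, hneg r (n + 1) / ((n + 1 : ℕ) : ℝ) ^ p) =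
      zetaVal (p + 1) + ∑ k ∈ Finset.Icc 1 r, (-1 : ℝ) ^ k * (Nat.choose r k : ℝ) *
        (Hgen 1 k / (k : ℝ) ^ p +
          ∑ j ∈ Finset.Icc 2 p, (Hgen j k - zetaVal j) / (k : ℝ) ^ (p + 1 - j)) := by
  have hterm : ∀ n : ℕ, hneg r (n + 1) / ((n + 1 : ℕ) : ℝ) ^ p = ∑ k ∈ range (r + 1),
      (-1 : ℝ) ^ k * r.choose k * (1 / (((n + 1 - k : ℕ) : ℝ) * ((n + 1 : ℕ) : ℝ) ^ p)) := by
    intro n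
    rw [hneg_eq_sum_range, sum_div]
    exact sum_congr rfl fun k _ => by ring
  have hsum : HasSum (fun n : ℕ => hneg r (n + 1) / ((n + 1 : ℕ) : ℝ) ^ p)
      (∑ k ∈ range (r + 1), (-1 : ℝ) ^ k * r.choose k * shiftedZeta k p) := by
    simp only [hterm]
    exact hasSum_sum fun k _ => (hasSum_shiftedZeta_truncSub k hp).mul_left _
  rw [hsum.tsum_eq, sum_range_eq_add_Ico _ (by omega), ← Ico_add_one_right_eq_Icc]
  simp only [pow_zero, Nat.choose_zero_right, Nat.cast_one, one_mul, shiftedZeta_zero]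
  exact congrArg _ (sum_congr rfl fun k hk => by
    rw [shiftedZeta_eq (by simp at hk; omega) hp])

theorem stmt2 (p r : ℕ) (hp : 1 ≤ p) (hr : 1 ≤ r) :
    (∑' n : ℕ, hneg r (n + 1) / ((n + 1 : ℕ) : ℝ) ^ p) =
      zetaVal (p + 1) + ∑ k ∈ Finset.Icc 1 r, (-1 : ℝ) ^ k * (Nat.choose r k : ℝ) *
        (Hgen 1 k / (k : ℝ) ^ p +
          ∑ j ∈ Finset.Icc 2 p, (Hgen j k - zetaVal j) / (k : ℝ) ^ (p + 1 - j)) :=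
  stmt2_general p r hp
end

section
/- Let N, s, t be positive integers and let b, c be non-negative integers with b ≠ c. Then Σ_{n=1}^N 1/((n+b)^s (n+c)^t) = Σ_{j=1}^s ((-1)^{s-j}/(c-b)^{t+s-j}) C(s+t-j-1, t-1) (H_{N+b}^{(j)} - H_b^{(j)}) + Σ_{j=1}^t ((-1)^{t-j}/(b-c)^{t+s-j}) C(s+t-j-1, s-1) (H_{N+c}^{(j)} - H_c^{(j)}). -/
open Finset

/-!
With `y = x + d`, the identity
`d / (x ^ (s+1) * y ^ (t+1)) = 1 / (x ^ (s+1) * y ^ t) - 1 / (x ^ s * y ^ (t+1))` gives, by induction on `(s, t)`, the partial fraction expansion of `1 / (x ^ s * y ^ t)`: the coefficient of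
`1 / x ^ (s - i)` is `(-1) ^ i * C(t + i - 1, i) / d ^ (t + i)`, and symmetrically at `y` with `-d`.
Taking `x = n + b`, `y = n + c` and summing over `n ∈ [1, N]` turns each `1 / (n + a) ^ j` into
`H_{N+a}^{(j)} - H_a^{(j)}`.
-/

section PartialFractions

variable {K : Type*} [Field K]

/-- The principal part at `x` of the partial fraction expansion of `1 / (x ^ s * (x + d) ^ t)`.
`Nat.multichoose t i = C(t + i - 1, i)` is the coefficient of `z ^ i` in `(1 - z) ^ (-t)`; unlike
`C(t + i - 1, t - 1)` it is also correct for `t = 0`, where the sum is `1 / x ^ s`. -/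
noncomputable def partialFracSum (d x : K) (s t : ℕ) : K :=
  ∑ i ∈ range s, (-1) ^ i * (Nat.multichoose t i : K) / (d ^ (t + i) * x ^ (s - i))

variable (d x : K)

@[simp]
lemma partialFracSum_zero_left (t : ℕ) : partialFracSum d x 0 t = 0 := by
  simp [partialFracSum]

lemma partialFracSum_zero_right (s : ℕ) : partialFracSum d x (s + 1) 0 = 1 / x ^ (s + 1) := by
  rw [partialFracSum, sum_range_succ']
  simp [Finset.sum_eq_zero]

lemma mul_partialFracSum_succ_succ (hd : d ≠ 0) (s t : ℕ) :
    d * partialFracSum d x (s + 1) (t + 1) =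
      partialFracSum d x (s + 1) t - partialFracSum d x s (t + 1) := by
  have head : d * ((-1) ^ 0 * (Nat.multichoose (t + 1) 0 : K) / (d ^ (t + 1 + 0) * x ^ (s + 1 - 0)))
      = (-1) ^ 0 * (Nat.multichoose t 0 : K) / (d ^ (t + 0) * x ^ (s + 1 - 0)) := by
    simp only [Nat.multichoose_zero_right, add_zero, pow_succ]
    field_simp
  have tail : ∀ i ∈ range s,
      d * ((-1) ^ (i + 1) * (Nat.multichoose (t + 1) (i + 1) : K) /
          (d ^ (t + 1 + (i + 1)) * x ^ (s + 1 - (i + 1)))) =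
        (-1) ^ (i + 1) * (Nat.multichoose t (i + 1) : K) / (d ^ (t + (i + 1)) * x ^ (s + 1 - (i + 1)))
          - (-1) ^ i * (Nat.multichoose (t + 1) i : K) / (d ^ (t + 1 + i) * x ^ (s - i)) := by
    intro i _
    rw [Nat.multichoose_succ_succ, Nat.succ_sub_succ, show t + 1 + (i + 1) = t + (i + 1) + 1 by ring,
      show t + 1 + i = t + (i + 1) by ring]
    push_cast
    field_simp
    ring
  rw [partialFracSum, partialFracSum, partialFracSum, sum_range_succ', sum_range_succ' _ s, mul_add,
    mul_sum, sum_congr rfl tail, sum_sub_distrib, head]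
  ring

lemma partialFracSum_eq_sum_Icc (s : ℕ) {t : ℕ} (ht : t ≠ 0) :
    partialFracSum d x s t = ∑ j ∈ Icc 1 s, (-1) ^ (s - j) / d ^ (t + s - j) *
      (Nat.choose (s + t - j - 1) (t - 1) : K) * (1 / x ^ j) := by
  refine sum_nbij' (fun i => s - i) (fun j => s - j) ?_ ?_ ?_ ?_ ?_
  · simp only [mem_range, mem_Icc]
    omega
  · simp only [mem_range, mem_Icc]
    omega
  · simp only [mem_range]
    omega
  · simp only [mem_Icc]
    omega
  · intro i hi
    rw [mem_range] at hi
    rw [show s - (s - i) = i by omega, show t + s - (s - i) = t + i by omega,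
      show s + t - (s - i) - 1 = t - 1 + i by omega, Nat.choose_symm_add, Nat.multichoose_eq,
      show t + i - 1 = t - 1 + i by omega]
    ring

theorem one_div_pow_mul_pow_eq_partialFracSum {x y : K} (hx : x ≠ 0) (hy : y ≠ 0) (hxy : x ≠ y)
    (s t : ℕ) (hst : s ≠ 0 ∨ t ≠ 0) :
    1 / (x ^ s * y ^ t) = partialFracSum (y - x) x s t + partialFracSum (x - y) y t s := by
  have hyx : y - x ≠ 0 := sub_ne_zero.mpr hxy.symm
  induction s generalizing t with
  | zero =>
    obtain ⟨t, rfl⟩ := Nat.exists_eq_succ_of_ne_zero (hst.resolve_left (by simp))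
    simp [partialFracSum_zero_right]
  | succ s ihs =>
    clear hst
    induction t with
    | zero => simp [partialFracSum_zero_right]
    | succ t iht =>
      have split : (y - x) * (1 / (x ^ (s + 1) * y ^ (t + 1))) =
          1 / (x ^ (s + 1) * y ^ t) - 1 / (x ^ s * y ^ (t + 1)) := by
        field_simp
        ring
      rw [iht, ihs (t + 1) (Or.inr t.succ_ne_zero)] at split
      apply mul_left_cancel₀ hyx
      rw [split, mul_add, mul_partialFracSum_succ_succ _ _ hyx,
        show (y - x) * partialFracSum (x - y) y (t + 1) (s + 1)
          = -((x - y) * partialFracSum (x - y) y (t + 1) (s + 1)) by ring,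
        mul_partialFracSum_succ_succ _ _ (sub_ne_zero.mpr hxy)]
      ring

end PartialFractions

lemma Hgen_add_sub_Hgen (j a N : ℕ) :
    Hgen j (N + a) - Hgen j a = ∑ n ∈ Icc 1 N, 1 / ((n + a : ℕ) : ℝ) ^ j := by
  induction N with
  | zero => simp
  | succ N ih =>
    rw [sum_Icc_succ_top (by omega), ← ih, show N + 1 + a = N + a + 1 by ring]
    simp only [Hgen]
    rw [sum_Icc_succ_top (by omega : 1 ≤ N + a + 1)]
    ring

lemma sum_partialFracSum_nat_add (d : ℝ) (a N s : ℕ) {t : ℕ} (ht : t ≠ 0) :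
    ∑ n ∈ Icc 1 N, partialFracSum d ((n + a : ℕ) : ℝ) s t =
      ∑ j ∈ Icc 1 s, (-1) ^ (s - j) / d ^ (t + s - j) * (Nat.choose (s + t - j - 1) (t - 1) : ℝ) *
        (Hgen j (N + a) - Hgen j a) := by
  simp_rw [partialFracSum_eq_sum_Icc _ _ _ ht, Hgen_add_sub_Hgen, mul_sum]
  exact sum_comm

theorem stmt3_general (N s t : ℕ) (hs : 1 ≤ s) (ht : 1 ≤ t)
    (b c : ℕ) (hbc : b ≠ c) :
    ∑ n ∈ Finset.Icc 1 N, 1 / (((n + b : ℕ) : ℝ) ^ s * ((n + c : ℕ) : ℝ) ^ t) =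
      (∑ j ∈ Finset.Icc 1 s, (-1 : ℝ) ^ (s - j) / ((c : ℝ) - (b : ℝ)) ^ (t + s - j) *
        (Nat.choose (s + t - j - 1) (t - 1) : ℝ) * (Hgen j (N + b) - Hgen j b)) +
      ∑ j ∈ Finset.Icc 1 t, (-1 : ℝ) ^ (t - j) / ((b : ℝ) - (c : ℝ)) ^ (t + s - j) *
        (Nat.choose (s + t - j - 1) (s - 1) : ℝ) * (Hgen j (N + c) - Hgen j c) := by
  have cast_sub (n a a' : ℕ) : ((n + a : ℕ) : ℝ) - ((n + a' : ℕ) : ℝ) = a - a' := by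
    push_cast
    ring
  calc _ = ∑ n ∈ Icc 1 N, (partialFracSum ((c : ℝ) - b) ((n + b : ℕ) : ℝ) s t +
        partialFracSum ((b : ℝ) - c) ((n + c : ℕ) : ℝ) t s) := by
        refine sum_congr rfl fun n hn => ?_
        rw [mem_Icc] at hn
        rw [one_div_pow_mul_pow_eq_partialFracSum (Nat.cast_ne_zero.mpr (by omega))
          (Nat.cast_ne_zero.mpr (by omega)) (Nat.cast_injective.ne (by omega)) s t (Or.inl (by omega)), cast_sub, cast_sub]
    _ = _ := by
        rw [sum_add_distrib, sum_partialFracSum_nat_add _ _ _ _ (by omega),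
          sum_partialFracSum_nat_add _ _ _ _ (by omega), add_comm t s]

theorem stmt3 (N s t : ℕ) (hN : 1 ≤ N) (hs : 1 ≤ s) (ht : 1 ≤ t)
    (b c : ℕ) (hbc : b ≠ c) :
    ∑ n ∈ Finset.Icc 1 N, 1 / (((n + b : ℕ) : ℝ) ^ s * ((n + c : ℕ) : ℝ) ^ t) =
      (∑ j ∈ Finset.Icc 1 s, (-1 : ℝ) ^ (s - j) / ((c : ℝ) - (b : ℝ)) ^ (t + s - j) *
        (Nat.choose (s + t - j - 1) (t - 1) : ℝ) * (Hgen j (N + b) - Hgen j b)) +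
      ∑ j ∈ Finset.Icc 1 t, (-1 : ℝ) ^ (t - j) / ((b : ℝ) - (c : ℝ)) ^ (t + s - j) *
        (Nat.choose (s + t - j - 1) (s - 1) : ℝ) * (Hgen j (N + c) - Hgen j c) :=
  stmt3_general N s t hs ht b c hbc
end

section
/- Let j, l, p be positive integers and let (f_n)_{n≥1} be a real sequence such that: for every s with 0 ≤ s ≤ l, the series Σ_{n=1}^∞ f_n/((n+j)(n+s)) converges; for every m with 1 ≤ m ≤ p-1, the series Σ_{n=1}^∞ f_n/n^{p+1-m} converges; and for every m with 1 ≤ m ≤ p-1 and every a with 1 ≤ a ≤ l, the series Σ_{n=1}^∞ f_n/(n^{p-m}(n+a)) converges. Then Σ_{n=1}^∞ f_n/(n^p (n+j) C(n+l,l)) = Σ_{m=1}^{p-1} ((-1)^{m-1}/j^m) { Σ_{n=1}^∞ f_n/n^{p+1-m} + Σ_{a=1}^l (-1)^a C(l,a) Σ_{n=1}^∞ f_n/(n^{p-m}(n+a)) } + ((-1)^{p-1}/j^{p-1}) Σ_{s=0}^l (-1)^s C(l,s) Σ_{n=1}^∞ f_n/((n+j)(n+s)). -/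
/-!
For `x = n + 1` there are two partial-fraction expansions,
`1 / (x C(x+l, l)) = l! / (x (x+1) ⋯ (x+l)) = ∑ₛ (-1)^s C(l,s) / (x+s)`
(induction on `l` through Pascal's rule) and
`1 / (x^(p-1) (x+j)) = ∑_{m=1}^{p-1} (-1)^(m-1) j^(-m) x^(m-p) + (-1)^(p-1) j^(1-p) / (x+j)`.
Their product writes each summand on the left as a fixed finite linear combination of summands
of the convergent series in the hypotheses, so the series can be summed termwise.
-/

open Finset

open Nat Polynomial

theorem sum_range_choose_mul_neg_one_pow_div_add {K : Type*} [Field K] (l : ℕ) (x : K)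
    (hx : (ascPochhammer K (l + 1)).eval x ≠ 0) :
    ∑ s ∈ range (l + 1), (l.choose s : K) * ((-1) ^ s / (x + s)) =
      l ! / (ascPochhammer K (l + 1)).eval x := by
  induction l generalizing x with
  | zero => simp
  | succ l ih =>
    have hsucc_right : (ascPochhammer K (l + 2)).eval x =
        (ascPochhammer K (l + 1)).eval x * (x + (l + 1)) := by
      rw [ascPochhammer_succ_eval]; push_cast; ring
    have hsucc_left : (ascPochhammer K (l + 2)).eval x =
        x * (ascPochhammer K (l + 1)).eval (x + 1) := by
      rw [ascPochhammer_succ_left]; simp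
    have h₀ : (ascPochhammer K (l + 1)).eval x ≠ 0 := by
      rw [hsucc_right] at hx; exact left_ne_zero_of_mul hx
    have h₁ : (ascPochhammer K (l + 1)).eval (x + 1) ≠ 0 := by
      rw [hsucc_left] at hx; exact right_ne_zero_of_mul hx
    have hpascal : ∑ s ∈ range (l + 2), ((l + 1).choose s : K) * ((-1) ^ s / (x + s)) =
        ∑ s ∈ range (l + 1), (l.choose s : K) * ((-1) ^ s / (x + s)) -
          ∑ s ∈ range (l + 1), (l.choose s : K) * ((-1) ^ s / (x + 1 + s)) := by
      rw [sum_choose_succ_mul (fun s _ => (-1 : K) ^ s / (x + s)), sub_eq_add_neg,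
        ← sum_neg_distrib]
      congr 1
      refine sum_congr rfl fun s _ => ?_
      push_cast
      ring
    rw [hpascal, ih x h₀, ih (x + 1) h₁, div_sub_div _ _ h₀ h₁,
      div_eq_div_iff (mul_ne_zero h₀ h₁) hx, factorial_succ]
    push_cast
    linear_combination (l ! * (ascPochhammer K (l + 1)).eval (x + 1)) * hsucc_right -
      ((ascPochhammer K (l + 1)).eval x * l !) * hsucc_left

theorem one_div_pow_mul_add_eq_sum {K : Type*} [Field K] (k : ℕ) {x y : K} (hx : x ≠ 0)
    (hy : y ≠ 0) (hxy : x + y ≠ 0) :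
    1 / (x ^ k * (x + y)) =
      ∑ m ∈ Icc 1 k, (-1) ^ (m - 1) / y ^ m * (1 / x ^ (k + 1 - m)) +
        (-1) ^ k / y ^ k * (1 / (x + y)) := by
  induction k with
  | zero => simp
  | succ k ih =>
    have hshift : ∀ m ∈ Icc 1 k, 1 / x * ((-1) ^ (m - 1) / y ^ m * (1 / x ^ (k + 1 - m))) =
        (-1) ^ (m - 1) / y ^ m * (1 / x ^ (k + 1 + 1 - m)) := by
      intro m hm
      rw [show k + 1 + 1 - m = k + 1 - m + 1 by grind, pow_succ]
      ring
    rw [pow_succ, mul_comm (x ^ k), mul_assoc, ← one_div_mul_one_div, ih, mul_add, mul_sum,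
      sum_congr rfl hshift, sum_Icc_succ_top (by omega)]
    simp only [Nat.add_sub_cancel, Nat.add_sub_cancel_left, pow_one]
    field_simp
    ring

theorem ascPochhammer_eval_natCast_add_one {S : Type*} [CommSemiring S] (n l : ℕ) :
    (ascPochhammer S (l + 1)).eval ((n : S) + 1) =
      ((n : S) + 1) * ((l ! : S) * ((n + 1 + l).choose l : S)) := by
  rw [ascPochhammer_succ_left, eval_mul, eval_X, eval_comp, eval_add, eval_X, eval_one,
    ← Nat.cast_add_one, ← Nat.cast_add_one, ← ascPochhammer_eval_cast,
    ascPochhammer_nat_eq_ascFactorial, ascFactorial_eq_factorial_mul_choose]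
  push_cast
  ring

theorem one_div_mul_choose_eq_sum (n l : ℕ) :
    1 / (((n : ℝ) + 1) * ((n + 1 + l).choose l : ℝ)) =
      ∑ s ∈ range (l + 1), (l.choose s : ℝ) * ((-1) ^ s / ((n : ℝ) + 1 + s)) := by
  have hpos : 0 < (ascPochhammer ℝ (l + 1)).eval ((n : ℝ) + 1) :=
    ascPochhammer_pos _ _ (by positivity)
  rw [sum_range_choose_mul_neg_one_pow_div_add l _ hpos.ne', ascPochhammer_eval_natCast_add_one]
  have : (0 : ℝ) < l ! := by positivity
  field_simp

theorem div_pow_mul_add_mul_choose_eq (n j l p : ℕ) (hj : 0 < j) (hp : 0 < p) (c : ℝ) :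
    c / (((n : ℝ) + 1) ^ p * ((n : ℝ) + 1 + j) * ((n + 1 + l).choose l : ℝ)) =
      (∑ m ∈ Icc 1 (p - 1), (-1 : ℝ) ^ (m - 1) / (j : ℝ) ^ m *
        (c / ((n : ℝ) + 1) ^ (p + 1 - m) +
         ∑ a ∈ Icc 1 l, (-1 : ℝ) ^ a * (l.choose a : ℝ) *
           (c / (((n : ℝ) + 1) ^ (p - m) * ((n : ℝ) + 1 + a))))) +
      (-1 : ℝ) ^ (p - 1) / (j : ℝ) ^ (p - 1) *
        ∑ s ∈ range (l + 1), (-1 : ℝ) ^ s * (l.choose s : ℝ) *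
          (c / (((n : ℝ) + 1 + j) * ((n : ℝ) + 1 + s))) := by
  obtain ⟨k, rfl⟩ : ∃ k, p = k + 1 := ⟨p - 1, by omega⟩
  have hx : (0 : ℝ) < n + 1 := by positivity
  have hj' : (0 : ℝ) < j := by exact_mod_cast hj
  rw [show c / (((n : ℝ) + 1) ^ (k + 1) * ((n : ℝ) + 1 + j) * ((n + 1 + l).choose l : ℝ)) =
      c * (1 / (((n : ℝ) + 1) ^ k * ((n : ℝ) + 1 + j))) *
        (1 / (((n : ℝ) + 1) * ((n + 1 + l).choose l : ℝ))) by rw [pow_succ]; field_simp,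
    one_div_mul_choose_eq_sum, one_div_pow_mul_add_eq_sum k hx.ne' hj'.ne' (by positivity),
    Nat.add_sub_cancel]
  set x : ℝ := n + 1
  have hsplit : ∀ m ∈ Icc 1 k, c / x ^ (k + 1 + 1 - m) +
      ∑ a ∈ Icc 1 l, (-1 : ℝ) ^ a * (l.choose a : ℝ) * (c / (x ^ (k + 1 - m) * (x + a))) =
        ∑ s ∈ range (l + 1), (-1 : ℝ) ^ s * (l.choose s : ℝ) *
          (c / (x ^ (k + 1 - m) * (x + s))) := by
    intro m hm
    rw [sum_range_eq_add_Ico _ (by omega), Ico_add_one_right_eq_Icc,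
      show k + 1 + 1 - m = k + 1 - m + 1 by grind]
    simp [pow_succ]
  have hdist : ∀ γ D : ℝ,
      c * (γ * (1 / D)) * ∑ s ∈ range (l + 1), (l.choose s : ℝ) * ((-1) ^ s / (x + s)) =
        γ * ∑ s ∈ range (l + 1),
          (-1 : ℝ) ^ s * (l.choose s : ℝ) * (c / (D * (x + s))) := by
    intro γ D
    rw [mul_sum, mul_sum]
    exact sum_congr rfl fun s _ => by rw [← div_div]; ring
  rw [sum_congr rfl fun m hm => congr_arg _ (hsplit m hm), mul_add, add_mul, mul_sum (Icc 1 k),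
    sum_mul (Icc 1 k), hdist]
  exact congr_arg (· + _) (sum_congr rfl fun m _ => hdist _ _)

theorem stmt5_general (j l p : ℕ) (hj : 1 ≤ j) (hp : 1 ≤ p) (f : ℕ → ℝ)
    (h1 : ∀ s ≤ l, Summable (fun n : ℕ =>
      f (n + 1) / (((n + 1 + j : ℕ) : ℝ) * ((n + 1 + s : ℕ) : ℝ))))
    (h2 : ∀ m, 1 ≤ m → m ≤ p - 1 →
      Summable (fun n : ℕ => f (n + 1) / ((n + 1 : ℕ) : ℝ) ^ (p + 1 - m)))
    (h3 : ∀ m, 1 ≤ m → m ≤ p - 1 → ∀ a, 1 ≤ a → a ≤ l →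
      Summable (fun n : ℕ =>
        f (n + 1) / (((n + 1 : ℕ) : ℝ) ^ (p - m) * ((n + 1 + a : ℕ) : ℝ)))) :
    ∑' n : ℕ, f (n + 1) /
        (((n + 1 : ℕ) : ℝ) ^ p * ((n + 1 + j : ℕ) : ℝ) * (Nat.choose (n + 1 + l) l : ℝ)) =
      (∑ m ∈ Finset.Icc 1 (p - 1), (-1 : ℝ) ^ (m - 1) / (j : ℝ) ^ m *
        ((∑' n : ℕ, f (n + 1) / ((n + 1 : ℕ) : ℝ) ^ (p + 1 - m)) +
         ∑ a ∈ Finset.Icc 1 l, (-1 : ℝ) ^ a * (Nat.choose l a : ℝ) *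
           ∑' n : ℕ, f (n + 1) / (((n + 1 : ℕ) : ℝ) ^ (p - m) * ((n + 1 + a : ℕ) : ℝ)))) +
      (-1 : ℝ) ^ (p - 1) / (j : ℝ) ^ (p - 1) *
        ∑ s ∈ Finset.range (l + 1), (-1 : ℝ) ^ s * (Nat.choose l s : ℝ) *
          ∑' n : ℕ, f (n + 1) / (((n + 1 + j : ℕ) : ℝ) * ((n + 1 + s : ℕ) : ℝ)) := by
  refine HasSum.tsum_eq (.congr_fun (.add
    (hasSum_sum fun m hm => .mul_left _ (.add (h2 m (mem_Icc.1 hm).1 (mem_Icc.1 hm).2).hasSum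
      (hasSum_sum fun a ha => .mul_left _
        (h3 m (mem_Icc.1 hm).1 (mem_Icc.1 hm).2 a (mem_Icc.1 ha).1 (mem_Icc.1 ha).2).hasSum)))
    (.mul_left _ (hasSum_sum fun s hs => .mul_left _ (h1 s (mem_range_succ_iff.1 hs)).hasSum)))
    fun n => ?_)
  push_cast
  exact div_pow_mul_add_mul_choose_eq n j l p hj hp (f (n + 1))

theorem stmt5 (j l p : ℕ) (hj : 1 ≤ j) (hl : 1 ≤ l) (hp : 1 ≤ p) (f : ℕ → ℝ)
    (h1 : ∀ s ≤ l, Summable (fun n : ℕ =>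
      f (n + 1) / (((n + 1 + j : ℕ) : ℝ) * ((n + 1 + s : ℕ) : ℝ))))
    (h2 : ∀ m, 1 ≤ m → m ≤ p - 1 →
      Summable (fun n : ℕ => f (n + 1) / ((n + 1 : ℕ) : ℝ) ^ (p + 1 - m)))
    (h3 : ∀ m, 1 ≤ m → m ≤ p - 1 → ∀ a, 1 ≤ a → a ≤ l →
      Summable (fun n : ℕ =>
        f (n + 1) / (((n + 1 : ℕ) : ℝ) ^ (p - m) * ((n + 1 + a : ℕ) : ℝ)))) :
    ∑' n : ℕ, f (n + 1) /
        (((n + 1 : ℕ) : ℝ) ^ p * ((n + 1 + j : ℕ) : ℝ) * (Nat.choose (n + 1 + l) l : ℝ)) =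
      (∑ m ∈ Finset.Icc 1 (p - 1), (-1 : ℝ) ^ (m - 1) / (j : ℝ) ^ m *
        ((∑' n : ℕ, f (n + 1) / ((n + 1 : ℕ) : ℝ) ^ (p + 1 - m)) +
         ∑ a ∈ Finset.Icc 1 l, (-1 : ℝ) ^ a * (Nat.choose l a : ℝ) *
           ∑' n : ℕ, f (n + 1) / (((n + 1 : ℕ) : ℝ) ^ (p - m) * ((n + 1 + a : ℕ) : ℝ)))) +
      (-1 : ℝ) ^ (p - 1) / (j : ℝ) ^ (p - 1) *
        ∑ s ∈ Finset.range (l + 1), (-1 : ℝ) ^ s * (Nat.choose l s : ℝ) *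
          ∑' n : ℕ, f (n + 1) / (((n + 1 + j : ℕ) : ℝ) * ((n + 1 + s : ℕ) : ℝ)) :=
  stmt5_general j l p hj hp f h1 h2 h3
end

section
/- Let p, q be positive integers and l a non-negative integer with p > q + 1, and let c_0, c_1, ..., c_q be the integers determined by the polynomial identity (x+l+1)(x+l+2)···(x+l+q) = Σ_{k=0}^q c_k x^k (i.e., c_k is the (l+1)-Stirling number of the first kind, the coefficient of x^k in the ascending factorial starting at l+1). Then Σ_{n=q+l+1}^∞ C(n,q) H_n/(n-l-q)^p = C(q+l, l) Σ_{n=1}^∞ h_n^{(q+l+1)}/(n^p C(n+l, l)) + (H_{q+l}/q!) Σ_{k=0}^q c_k ζ(p-k). -/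
open Finset

/-! The closed form `h_n^{(r+1)} = C(n+r, r) (H_{n+r} - H_r)` and the identity
`C(q+l, l) C(n+q+l, q+l) = C(n+l, l) C(n+q+l, q)` turn the hyperharmonic series into
`∑ C(n+q+l, q) (H_{n+q+l} - H_{q+l}) / n^p`. What is left, `H_{q+l} ∑ C(n+q+l, q) / n^p`, is a
combination of zeta values because `q! C(n+q+l, q) = (n+l+1)⋯(n+l+q) = ∑ c_k n^k`. All series
converge since `H_n ≤ 2√n` and `p ≥ q + 2`. -/

lemma Hgen_one_succ (n : ℕ) : Hgen 1 (n + 1) = Hgen 1 n + 1 / ((n : ℝ) + 1) := by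
  rw [Hgen, Hgen, sum_Icc_succ_top (by omega)]
  push_cast
  ring

lemma Hgen_one_nonneg (n : ℕ) : 0 ≤ Hgen 1 n :=
  sum_nonneg fun k _ => by positivity

lemma Hgen_one_le_two_mul_sqrt (n : ℕ) : Hgen 1 n ≤ 2 * √n := by
  induction n with
  | zero => simp [Hgen]
  | succ n ih =>
    rw [Hgen_one_succ, Nat.cast_succ]
    have hsq : √((n : ℝ) + 1) ^ 2 = n + 1 := Real.sq_sqrt (by positivity)
    have hmono : √(n : ℝ) ≤ √((n : ℝ) + 1) := Real.sqrt_le_sqrt (by linarith)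
    have hone : 1 ≤ √((n : ℝ) + 1) := Real.one_le_sqrt.mpr (by simp)
    -- `1 / (n + 1) ≤ 1 / √(n + 1) ≤ 2 / (√(n + 1) + √n) = 2 (√(n + 1) - √n)`
    have key : 1 / ((n : ℝ) + 1) ≤ 2 * (√((n : ℝ) + 1) - √n) := by
      rw [div_le_iff₀ (by positivity)]
      nlinarith [Real.sq_sqrt (Nat.cast_nonneg (α := ℝ) n), Real.sqrt_nonneg (n : ℝ),
        mul_nonneg (sub_nonneg.2 hmono) (sub_nonneg.2 hone)]
    linarith

lemma hpos_succ_succ (r n : ℕ) : hpos (r + 1) (n + 1) = hpos (r + 1) n + hpos r (n + 1) := by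
  simp only [hpos]
  rw [sum_Icc_succ_top (by omega)]

lemma choose_mul_Hgen_sub_succ (m r : ℕ) :
    ((m + 1).choose (r + 1) : ℝ) * (Hgen 1 (m + 1) - Hgen 1 (r + 1)) =
      (m.choose (r + 1) : ℝ) * (Hgen 1 m - Hgen 1 (r + 1)) +
        (m.choose r : ℝ) * (Hgen 1 m - Hgen 1 r) := by
  have hpascal : ((m + 1).choose (r + 1) : ℝ) = m.choose r + m.choose (r + 1) := by
    exact_mod_cast Nat.choose_succ_succ' m r
  have habsorb :
      ((m + 1).choose (r + 1) : ℝ) / ((m : ℝ) + 1) = m.choose r / ((r : ℝ) + 1) := by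
    rw [div_eq_div_iff (by positivity) (by positivity), mul_comm _ ((m : ℝ) + 1)]
    exact_mod_cast (Nat.add_one_mul_choose_eq m r).symm
  rw [Hgen_one_succ, Hgen_one_succ]
  linear_combination (Hgen 1 m - Hgen 1 r - 1 / ((r : ℝ) + 1)) * hpascal + habsorb

theorem hpos_succ_eq_choose_mul (r n : ℕ) :
    hpos (r + 1) n = ((n + r).choose r : ℝ) * (Hgen 1 (n + r) - Hgen 1 r) := by
  induction r generalizing n with
  | zero => simp [hpos, Hgen]
  | succ r ihr =>
    induction n with
    | zero => simp [hpos]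
    | succ n ihn =>
      rw [hpos_succ_succ, ihn, ihr, show n + 1 + (r + 1) = n + (r + 1) + 1 by omega,
        choose_mul_Hgen_sub_succ, show n + 1 + r = n + (r + 1) by omega]

lemma prod_Icc_natCast_add (m q : ℕ) :
    ∏ i ∈ Icc 1 q, ((m : ℝ) + i) = ((m + q).choose q : ℝ) * q.factorial := by
  induction q with
  | zero => simp
  | succ q ih =>
    have habsorb : ((m + q + 1 : ℕ) : ℝ) * (m + q).choose q =
        (m + q + 1).choose (q + 1) * ((q : ℝ) + 1) := by
      exact_mod_cast Nat.add_one_mul_choose_eq (m + q) q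
    rw [prod_Icc_succ_top (by omega), ih, ← add_assoc, Nat.factorial_succ]
    push_cast at habsorb ⊢
    linear_combination (q.factorial : ℝ) * habsorb

lemma choose_mul_choose_add (N q l : ℕ) :
    (q + l).choose l * (N + q + l).choose (q + l) = (N + l).choose l * (N + q + l).choose q := by
  have h := Nat.choose_mul (n := N + q + l) (k := q + l) (s := q) (by omega)
  rw [show N + q + l - q = N + l by omega, Nat.add_sub_cancel_left] at h
  rw [← Nat.choose_symm_add, mul_comm, h, mul_comm]

lemma choose_mul_hpos_div_choose (q l N : ℕ) :
    ((q + l).choose l : ℝ) * (hpos (q + l + 1) N / (N + l).choose l) =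
      ((N + q + l).choose q : ℝ) * (Hgen 1 (N + q + l) - Hgen 1 (q + l)) := by
  have hpos_choose : (0 : ℝ) < (N + l).choose l := by exact_mod_cast Nat.choose_pos (by omega)
  have hchoose : ((q + l).choose l : ℝ) * (N + q + l).choose (q + l) =
      (N + l).choose l * (N + q + l).choose q := by exact_mod_cast choose_mul_choose_add N q l
  rw [hpos_succ_eq_choose_mul, ← add_assoc]
  field_simp
  linear_combination (Hgen 1 (N + q + l) - Hgen 1 (q + l)) * hchoose

lemma sum_mul_one_div_pow_sub {p q : ℕ} (hqp : q ≤ p) (a : ℕ → ℝ) {x : ℝ}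
    (hx : x ≠ 0) :
    ∑ k ∈ range (q + 1), a k * (1 / x ^ (p - k)) =
      (∑ k ∈ range (q + 1), a k * x ^ k) / x ^ p := by
  rw [sum_div]
  refine sum_congr rfl fun k hk => ?_
  rw [pow_sub₀ x hx (by grind)]
  field_simp

lemma choose_mul_Hgen_div_pow_eq {p q l : ℕ} (hqp : q ≤ p) {c : ℕ → ℤ}
    (hc : ∀ x : ℝ, (∏ i ∈ Icc 1 q, (x + (l : ℝ) + (i : ℝ))) =
      ∑ k ∈ range (q + 1), (c k : ℝ) * x ^ k) {N : ℕ} (hN : N ≠ 0) :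
    ((N + q + l).choose q : ℝ) * Hgen 1 (N + q + l) / (N : ℝ) ^ p =
      ((q + l).choose l : ℝ) * (hpos (q + l + 1) N / ((N : ℝ) ^ p * (N + l).choose l)) +
        Hgen 1 (q + l) / q.factorial *
          ∑ k ∈ range (q + 1), (c k : ℝ) * (1 / (N : ℝ) ^ (p - k)) := by
  have hcoeff : ∑ k ∈ range (q + 1), (c k : ℝ) * (N : ℝ) ^ k =
      ((N + q + l).choose q : ℝ) * q.factorial := by
    rw [← hc, show N + q + l = N + l + q by omega, ← prod_Icc_natCast_add]
    simp only [Nat.cast_add]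
  rw [sum_mul_one_div_pow_sub hqp _ (by exact_mod_cast hN), hcoeff, div_mul_eq_div_div_swap,
    ← mul_div_assoc, choose_mul_hpos_div_choose]
  field_simp
  ring

lemma hasSum_one_div_natCast_succ_pow {k : ℕ} (hk : 2 ≤ k) :
    HasSum (fun n : ℕ => 1 / ((n + 1 : ℕ) : ℝ) ^ k) (zetaVal k) := by
  have hsum := (summable_nat_add_iff 1).mpr (Real.summable_one_div_nat_pow.mpr hk)
  simpa [zetaVal] using hsum.hasSum

lemma summable_sqrt_div_sq : Summable fun n : ℕ => √n / (n : ℝ) ^ 2 := by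
  refine (Real.summable_nat_rpow.mpr (show (-3 / 2 : ℝ) < -1 by norm_num)).congr fun n => ?_
  rcases Nat.eq_zero_or_pos n with rfl | hn
  · norm_num
  · have hn' : (0 : ℝ) < n := by exact_mod_cast hn
    rw [Real.sqrt_eq_rpow, ← Real.rpow_natCast, ← Real.rpow_sub hn']
    norm_num

lemma choose_mul_Hgen_le (q s : ℕ) {N : ℕ} (hN : 1 ≤ N) :
    ((N + s).choose q : ℝ) * Hgen 1 (N + s) ≤
      2 * (1 + s : ℝ) ^ q * √(1 + s) * ((N : ℝ) ^ q * √N) := by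
  have hle : ((N + s : ℕ) : ℝ) ≤ (1 + s) * N := by
    have : (1 : ℝ) ≤ N := by exact_mod_cast hN
    push_cast
    nlinarith
  have hchoose : ((N + s).choose q : ℝ) ≤ ((1 + s) * N) ^ q :=
    (Nat.cast_le.mpr (Nat.choose_le_pow _ _)).trans <| by
      push_cast at hle ⊢; exact pow_le_pow_left₀ (by positivity) hle q
  have hH : Hgen 1 (N + s) ≤ 2 * (√(1 + s) * √N) := by
    rw [← Real.sqrt_mul (by positivity)]
    exact (Hgen_one_le_two_mul_sqrt _).trans (by gcongr)
  calc ((N + s).choose q : ℝ) * Hgen 1 (N + s)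
      ≤ ((1 + s) * N) ^ q * (2 * (√(1 + s) * √N)) :=
        mul_le_mul hchoose hH (Hgen_one_nonneg _) (by positivity)
    _ = _ := by rw [mul_pow]; ring

lemma summable_choose_mul_Hgen_div_pow {p q s : ℕ} (hp : q + 2 ≤ p) :
    Summable fun n : ℕ =>
      ((n + 1 + s).choose q : ℝ) * Hgen 1 (n + 1 + s) / ((n + 1 : ℕ) : ℝ) ^ p := by
  set K : ℝ := 2 * (1 + s : ℝ) ^ q * √(1 + s)
  refine Summable.of_nonneg_of_le (fun n => by have := Hgen_one_nonneg (n + 1 + s); positivity)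
    (fun n => ?_) (((summable_nat_add_iff 1).mpr summable_sqrt_div_sq).mul_left K)
  set x : ℝ := ((n + 1 : ℕ) : ℝ)
  have hx : 1 ≤ x := Nat.one_le_cast.mpr (Nat.le_add_left 1 n)
  calc ((n + 1 + s).choose q : ℝ) * Hgen 1 (n + 1 + s) / x ^ p
      ≤ K * (x ^ q * √x) / x ^ (q + 2) :=
        div_le_div₀ (by positivity) (choose_mul_Hgen_le q s (Nat.le_add_left 1 n)) (by positivity)
          (pow_le_pow_right₀ hx hp)
    _ = K * (√x / x ^ 2) := by
        field_simp
        ring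

theorem stmt12_general (p q : ℕ) (l : ℕ) (hpq : p > q + 1) (c : ℕ → ℤ)
    (hc : ∀ x : ℝ, (∏ i ∈ Finset.Icc 1 q, (x + (l : ℝ) + (i : ℝ))) =
      ∑ k ∈ Finset.range (q + 1), (c k : ℝ) * x ^ k) :
    ∑' n : ℕ, (Nat.choose (n + 1 + q + l) q : ℝ) * Hgen 1 (n + 1 + q + l) /
        ((n + 1 : ℕ) : ℝ) ^ p =
      (Nat.choose (q + l) l : ℝ) *
        (∑' n : ℕ, hpos (q + l + 1) (n + 1) /
          (((n + 1 : ℕ) : ℝ) ^ p * (Nat.choose (n + 1 + l) l : ℝ))) +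
      Hgen 1 (q + l) / (Nat.factorial q : ℝ) *
        ∑ k ∈ Finset.range (q + 1), (c k : ℝ) * zetaVal (p - k) := by
  have hzeta : HasSum (fun n : ℕ => Hgen 1 (q + l) / q.factorial *
      ∑ k ∈ range (q + 1), (c k : ℝ) * (1 / ((n + 1 : ℕ) : ℝ) ^ (p - k)))
      (Hgen 1 (q + l) / q.factorial * ∑ k ∈ range (q + 1), (c k : ℝ) * zetaVal (p - k)) :=
    (hasSum_sum fun k hk => (hasSum_one_div_natCast_succ_pow (by grind)).mul_left _).mul_left _
  have hlhs : Summable fun n : ℕ => ((n + 1 + q + l).choose q : ℝ) * Hgen 1 (n + 1 + q + l) /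
      ((n + 1 : ℕ) : ℝ) ^ p := by
    simpa only [← add_assoc] using
      summable_choose_mul_Hgen_div_pow (s := q + l) (by omega : q + 2 ≤ p)
  have hsplit (n : ℕ) := choose_mul_Hgen_div_pow_eq (p := p) (l := l) (N := n + 1) (by omega) hc
    n.succ_ne_zero
  have hhyper : Summable fun n : ℕ => ((q + l).choose l : ℝ) *
      (hpos (q + l + 1) (n + 1) / (((n + 1 : ℕ) : ℝ) ^ p * (n + 1 + l).choose l)) :=
    (hlhs.sub hzeta.summable).congr fun n => by rw [hsplit]; ring
  rw [tsum_congr hsplit, hhyper.tsum_add hzeta.summable, tsum_mul_left, hzeta.tsum_eq]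

theorem stmt12 (p q : ℕ) (hq : 1 ≤ q) (l : ℕ) (hpq : p > q + 1) (c : ℕ → ℤ)
    (hc : ∀ x : ℝ, (∏ i ∈ Finset.Icc 1 q, (x + (l : ℝ) + (i : ℝ))) =
      ∑ k ∈ Finset.range (q + 1), (c k : ℝ) * x ^ k) :
    ∑' n : ℕ, (Nat.choose (n + 1 + q + l) q : ℝ) * Hgen 1 (n + 1 + q + l) /
        ((n + 1 : ℕ) : ℝ) ^ p =
      (Nat.choose (q + l) l : ℝ) *
        (∑' n : ℕ, hpos (q + l + 1) (n + 1) /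
          (((n + 1 : ℕ) : ℝ) ^ p * (Nat.choose (n + 1 + l) l : ℝ))) +
      Hgen 1 (q + l) / (Nat.factorial q : ℝ) *
        ∑ k ∈ Finset.range (q + 1), (c k : ℝ) * zetaVal (p - k) :=
  stmt12_general p q l hpq c hc
end

section
/- Let r be an integer and let l, m, p be non-negative integers with p + l > r. Then Σ_{n=1}^∞ h_n^{(r)} / ((n+m)^p C(n+m+l, l)) = Σ_{k=0}^m C(m,k) (-1)^k Σ_{n=1}^∞ h_n^{(r-k)} / (n^p C(n+l, l)), all series being convergent. -/
open Finset

/-!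
The hyperharmonic numbers satisfy `h_n^(r) - h_n^(r-1) = h_(n-1)^(r)` in every integer order (for
negative orders this is Pascal's rule for the sum formula, which agrees with the closed form), so
the alternating binomial sum `∑_k C(m,k) (-1)^k h_n^(r-k)` is the shifted number `h_(n-m)^(r)`,
which vanishes for `n ≤ m`. Dividing by `n^p C(n+l,l)`, summing over `n` and reindexing by
`n ↦ n + m` gives the identity. The series converge because `h_n^(r) = O(n^(r-1/2))` (from
`H_n ≤ 2√n` in positive orders, from the closed form `s! j! / (s+j+1)!` of `h_(s+j+1)^(-s)` in
non-positive ones), while the denominators grow like `n^(p+l)` with `p + l ≥ r + 1`.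
-/

open scoped Nat
open Asymptotics Filter

noncomputable def hnegSum (s n : ℕ) : ℝ :=
  ∑ k ∈ range n, (Nat.choose s k : ℝ) * (-1) ^ k / ((n - k : ℕ) : ℝ)

lemma hnegSum_zero_right (s : ℕ) : hnegSum s 0 = 0 := by
  simp [hnegSum]

lemma hnegSum_succ_succ (s n : ℕ) :
    hnegSum (s + 1) (n + 1) = hnegSum s (n + 1) - hnegSum s n := by
  simp only [hnegSum]
  rw [sum_range_succ'
      (fun k => (Nat.choose (s + 1) k : ℝ) * (-1) ^ k / ((n + 1 - k : ℕ) : ℝ)),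
    sum_range_succ' (fun k => (Nat.choose s k : ℝ) * (-1) ^ k / ((n + 1 - k : ℕ) : ℝ))]
  simp only [Nat.succ_sub_succ, Nat.choose_succ_succ, Nat.cast_add, add_mul, add_div,
    sum_add_distrib, pow_succ, mul_neg, mul_one, neg_div, sum_neg_distrib,
    Nat.choose_zero_right]
  ring

lemma hnegSum_add_succ (s j : ℕ) :
    hnegSum s (s + j + 1) = (-1) ^ s * s ! * j ! / (s + j + 1)! := by
  induction s generalizing j with
  | zero =>
    simp [hnegSum, sum_range_succ', Nat.factorial_succ, div_mul_cancel_right₀,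
      Nat.factorial_ne_zero]
  | succ s ih =>
    rw [show s + 1 + j + 1 = (s + j + 1) + 1 by ring, hnegSum_succ_succ,
      show s + j + 1 + 1 = s + (j + 1) + 1 by ring, ih, ih]
    simp only [Nat.factorial_succ, show s + (j + 1) + 1 = s + j + 1 + 1 by ring]
    push_cast
    field_simp
    ring

lemma hneg_eq_hnegSum (s n : ℕ) : hneg s n = hnegSum s n := by
  rw [hneg]
  split_ifs with h
  · obtain ⟨j, rfl⟩ := Nat.exists_eq_add_of_lt h
    have hfac := Nat.add_choose_mul_factorial_mul_factorial (j + 1) s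
    rw [hnegSum_add_succ, show s + j + 1 - s = j + 1 by omega, show s + j + 1 = j + 1 + s by ring,
      ← hfac, Nat.factorial_succ]
    push_cast
    field_simp
  · rfl

lemma hpos_zero_right (t : ℕ) : hpos t 0 = 0 := by
  cases t <;> simp [hpos]

lemma hh_zero_right (r : ℤ) : hh r 0 = 0 := by
  rw [hh]
  split_ifs
  · exact hpos_zero_right _
  · rw [hneg_eq_hnegSum, hnegSum_zero_right]

lemma hh_natCast (t n : ℕ) : hh t n = hpos t n := by
  simp [hh]

lemma hh_neg_natCast (s n : ℕ) : hh (-s) n = hnegSum s n := by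
  rcases Nat.eq_zero_or_pos s with rfl | hs
  · cases n <;> simp [hh, hpos, hnegSum, sum_range_succ']
  · rw [hh, if_neg (by omega), neg_neg, Int.toNat_natCast, hneg_eq_hnegSum]

lemma hh_sub_hh_sub_one (r : ℤ) (n : ℕ) : hh r n - hh (r - 1) n = hh r (n - 1) := by
  rcases le_or_gt r 0 with hr | hr
  · obtain ⟨s, rfl⟩ := Int.exists_eq_neg_ofNat hr
    rw [show -(s : ℤ) - 1 = -((s + 1 : ℕ) : ℤ) by push_cast; ring]
    simp only [hh_neg_natCast]
    cases n with
    | zero => simp [hnegSum_zero_right]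
    | succ n => rw [hnegSum_succ_succ, Nat.add_sub_cancel]; ring
  · obtain ⟨t, rfl⟩ := Int.eq_succ_of_zero_lt hr
    rw [add_sub_cancel_right, ← Nat.cast_succ]
    simp only [hh_natCast]
    cases n with
    | zero => simp [hpos_zero_right]
    | succ n => rw [hpos, hpos, sum_Icc_succ_top (by omega), Nat.add_sub_cancel]; ring

lemma sum_choose_mul_neg_one_pow_succ {R : Type*} [CommRing R] (f : ℕ → R) (m : ℕ) :
    ∑ k ∈ range (m + 2), (Nat.choose (m + 1) k : R) * (-1) ^ k * f k =
      ∑ k ∈ range (m + 1), (Nat.choose m k : R) * (-1) ^ k * (f k - f (k + 1)) := by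
  have := sum_choose_succ_mul (fun i _ => (-1 : R) ^ i * f i) m
  simp only [← mul_assoc] at this
  rw [this, ← sum_add_distrib]
  exact sum_congr rfl fun k _ => by ring

-- For `n < m` the truncated subtraction gives `hh r 0 = 0`, which is the right value there.
lemma sum_choose_mul_hh (m : ℕ) (r : ℤ) (n : ℕ) :
    ∑ k ∈ range (m + 1), (Nat.choose m k : ℝ) * (-1) ^ k * hh (r - k) n = hh r (n - m) := by
  induction m generalizing n with
  | zero => simp
  | succ m ih =>
    rw [sum_choose_mul_neg_one_pow_succ (fun k => hh (r - k) n)]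
    simp only [Nat.cast_succ, ← sub_sub, hh_sub_hh_sub_one, ih, Nat.sub_sub, add_comm 1 m]

lemma hpos_nonneg (t n : ℕ) : 0 ≤ hpos t n := by
  induction t generalizing n with
  | zero => simp only [hpos]; positivity
  | succ t ih => exact sum_nonneg fun k _ => ih k

lemma hpos_one_le_two_mul_sqrt (n : ℕ) : hpos 1 n ≤ 2 * √n := by
  induction n with
  | zero => simp [hpos]
  | succ n ih =>
    have hstep : hpos 1 (n + 1) = hpos 1 n + 1 / (n + 1) := by
      rw [hpos, hpos, sum_Icc_succ_top (by omega), hpos]; push_cast; rfl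
    have hsq : √(n + 1 : ℝ) ^ 2 = n + 1 := Real.sq_sqrt (by positivity)
    have hsq' : √(n : ℝ) ^ 2 = n := Real.sq_sqrt (by positivity)
    have hmono : √(n : ℝ) ≤ √(n + 1 : ℝ) := Real.sqrt_le_sqrt (by linarith)
    -- `1 / (n + 1) ≤ 1 / √(n + 1) ≤ 2 (√(n + 1) - √n)`
    have hinc : 1 / (n + 1 : ℝ) ≤ 2 * √(n + 1 : ℝ) - 2 * √(n : ℝ) := by
      rw [div_le_iff₀ (by positivity)]
      nlinarith [Real.sqrt_nonneg (n : ℝ), sq_nonneg (√(n + 1 : ℝ) - √(n : ℝ))]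
    rw [hstep]; push_cast; linarith

lemma hpos_succ_le_rpow (t n : ℕ) : hpos (t + 1) n ≤ 2 * (n : ℝ) ^ ((t : ℝ) + 1 / 2) := by
  induction t generalizing n with
  | zero => simpa [Real.sqrt_eq_rpow] using hpos_one_le_two_mul_sqrt n
  | succ t ih =>
    calc hpos (t + 2) n = ∑ k ∈ Icc 1 n, hpos (t + 1) k := rfl
      _ ≤ ∑ k ∈ Icc 1 n, 2 * (n : ℝ) ^ ((t : ℝ) + 1 / 2) := by
        refine sum_le_sum fun k hk => (ih k).trans ?_
        gcongr
        exact_mod_cast (mem_Icc.mp hk).2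
      _ = 2 * (n : ℝ) ^ (((t + 1 : ℕ) : ℝ) + 1 / 2) := by
        rw [sum_const, Nat.card_Icc, nsmul_eq_mul, Nat.add_sub_cancel,
          show ((t + 1 : ℕ) : ℝ) + 1 / 2 = ((t : ℝ) + 1 / 2) + 1 by push_cast; ring,
          Real.rpow_add_one' (by positivity) (by positivity)]
        ring

lemma factorial_mul_pow_le_pow_mul_factorial (s j : ℕ) :
    j ! * (s + j + 1) ^ (s + 1) ≤ (s + 1) ^ (s + 1) * (s + j + 1)! :=
  calc j ! * (s + j + 1) ^ (s + 1) ≤ j ! * ((s + 1) * (j + 1)) ^ (s + 1) := by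
        gcongr; nlinarith
    _ = (s + 1) ^ (s + 1) * (j ! * (j + 1) ^ (s + 1)) := by rw [mul_pow]; ring
    _ ≤ (s + 1) ^ (s + 1) * (s + j + 1)! := by
        rw [show s + j + 1 = j + (s + 1) by ring]
        exact Nat.mul_le_mul_left _ Nat.factorial_mul_pow_le_factorial

lemma abs_hh_neg_le (s j : ℕ) :
    |hh (-s) (s + j + 1)| ≤ s ! * (s + 1) ^ (s + 1) / ((s + j + 1 : ℕ) : ℝ) ^ (s + 1) := by
  rw [hh_neg_natCast, hnegSum_add_succ, abs_div, abs_mul, abs_mul, abs_pow, abs_neg, abs_one,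
    one_pow, one_mul, Nat.abs_cast, Nat.abs_cast, Nat.abs_cast,
    div_le_div_iff₀ (by positivity) (by positivity)]
  have := factorial_mul_pow_le_pow_mul_factorial s j
  calc (s ! * j ! : ℝ) * ((s + j + 1 : ℕ) : ℝ) ^ (s + 1)
      = s ! * ((j ! * (s + j + 1) ^ (s + 1) : ℕ) : ℝ) := by push_cast; ring
    _ ≤ s ! * (((s + 1) ^ (s + 1) * (s + j + 1)! : ℕ) : ℝ) := by gcongr
    _ = s ! * (s + 1) ^ (s + 1) * (s + j + 1)! := by push_cast; ring

lemma isBigO_hh_rpow (r : ℤ) :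
    (fun n : ℕ => hh r n) =O[atTop] fun n => (n : ℝ) ^ ((r : ℝ) - 1 / 2) := by
  rcases le_or_gt r 0 with hr | hr
  · obtain ⟨s, rfl⟩ := Int.exists_eq_neg_ofNat hr
    refine IsBigO.of_bound (s ! * (s + 1) ^ (s + 1)) ?_
    filter_upwards [eventually_gt_atTop s] with n hn
    obtain ⟨j, rfl⟩ := Nat.exists_eq_add_of_lt hn
    rw [Real.norm_eq_abs, Real.norm_of_nonneg (by positivity)]
    refine (abs_hh_neg_le s j).trans ?_
    rw [div_eq_mul_inv, ← Real.rpow_natCast ((s + j + 1 : ℕ) : ℝ) (s + 1),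
      ← Real.rpow_neg (by positivity)]
    gcongr
    · exact_mod_cast Nat.le_add_left 1 _
    · push_cast; linarith
  · obtain ⟨t, rfl⟩ := Int.eq_succ_of_zero_lt hr
    refine IsBigO.of_bound 2 (Eventually.of_forall fun n => ?_)
    rw [← Nat.cast_succ, hh_natCast, Real.norm_of_nonneg (hpos_nonneg _ _),
      Real.norm_of_nonneg (by positivity)]
    convert hpos_succ_le_rpow t n using 3
    push_cast; ring

lemma pow_le_factorial_mul_pow_mul_choose (a l p n : ℕ) :
    (n : ℝ) ^ (p + l) ≤
      l ! * (((n + a : ℕ) : ℝ) ^ p * (Nat.choose (n + a + l) l : ℝ)) := by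
  have hchoose : (n : ℝ) ^ l ≤ l ! * (Nat.choose (n + a + l) l : ℝ) := by
    have := Nat.pow_le_choose (α := ℝ) l (n + a + l)
    rw [div_le_iff₀ (by positivity)] at this
    calc (n : ℝ) ^ l ≤ ((n + a + l + 1 - l : ℕ) : ℝ) ^ l := by
          gcongr; exact_mod_cast (by omega : n ≤ n + a + l + 1 - l)
      _ ≤ l ! * (Nat.choose (n + a + l) l : ℝ) := by linarith
  have hpow : (n : ℝ) ^ p ≤ ((n + a : ℕ) : ℝ) ^ p := by
    gcongr; exact_mod_cast Nat.le_add_right n a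
  calc (n : ℝ) ^ (p + l) = (n : ℝ) ^ p * (n : ℝ) ^ l := pow_add _ _ _
    _ ≤ ((n + a : ℕ) : ℝ) ^ p * (l ! * (Nat.choose (n + a + l) l : ℝ)) := by gcongr
    _ = _ := by ring

lemma isBigO_inv_denom (a l p : ℕ) :
    (fun n : ℕ => (((n + a : ℕ) : ℝ) ^ p * (Nat.choose (n + a + l) l : ℝ))⁻¹) =O[atTop]
      fun n => (n : ℝ) ^ (-((p + l : ℕ) : ℝ)) := by
  refine IsBigO.of_bound (l !) ?_
  filter_upwards [eventually_gt_atTop 0] with n hn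
  have hD : 0 < ((n + a : ℕ) : ℝ) ^ p * (Nat.choose (n + a + l) l : ℝ) := by
    have := Nat.choose_pos (Nat.le_add_left l (n + a))
    positivity
  rw [norm_inv, Real.norm_of_nonneg hD.le, Real.norm_of_nonneg (by positivity),
    Real.rpow_neg (by positivity), Real.rpow_natCast, inv_eq_one_div, ← div_eq_mul_inv,
    div_le_div_iff₀ hD (by positivity), one_mul]
  exact pow_le_factorial_mul_pow_mul_choose a l p n

lemma summable_hh_div (r : ℤ) (l p a : ℕ) (h : r < p + l) :
    Summable fun n : ℕ =>
      hh r n / (((n + a : ℕ) : ℝ) ^ p * (Nat.choose (n + a + l) l : ℝ)) := by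
  have hexp : (r : ℝ) - 1 / 2 + -((p + l : ℕ) : ℝ) < -1 := by
    have : (r : ℝ) + 1 ≤ p + l := by exact_mod_cast Int.add_one_le_of_lt h
    push_cast; linarith
  refine summable_of_isBigO_nat (Real.summable_nat_rpow.mpr hexp)
    (((isBigO_hh_rpow r).mul (isBigO_inv_denom a l p)).congr' ?_ ?_)
  · exact Eventually.of_forall fun n => (div_eq_mul_inv _ _).symm
  · filter_upwards [eventually_gt_atTop 0] with n hn
    exact (Real.rpow_add (by positivity) _ _).symm

lemma tsum_add_nat_of_eq_zero {α : Type*} [AddCommMonoid α] [TopologicalSpace α] {f : ℕ → α}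
    (m : ℕ) (hf : ∀ n < m, f n = 0) : ∑' n, f (n + m) = ∑' n, f n :=
  (add_left_injective m).tsum_eq fun n hn =>
    ⟨n - m, Nat.sub_add_cancel (not_lt.mp fun h => hn (hf n h))⟩

theorem stmt14 (r : ℤ) (l m p : ℕ) (h : (p : ℤ) + l > r) :
    Summable (fun n : ℕ => hh r (n + 1) /
      (((n + 1 + m : ℕ) : ℝ) ^ p * (Nat.choose (n + 1 + m + l) l : ℝ))) ∧
    (∀ k ≤ m, Summable (fun n : ℕ => hh (r - (k : ℤ)) (n + 1) /
      (((n + 1 : ℕ) : ℝ) ^ p * (Nat.choose (n + 1 + l) l : ℝ)))) ∧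
    (∑' n : ℕ, hh r (n + 1) /
      (((n + 1 + m : ℕ) : ℝ) ^ p * (Nat.choose (n + 1 + m + l) l : ℝ))) =
      ∑ k ∈ Finset.range (m + 1), (Nat.choose m k : ℝ) * (-1 : ℝ) ^ k *
        ∑' n : ℕ, hh (r - (k : ℤ)) (n + 1) /
          (((n + 1 : ℕ) : ℝ) ^ p * (Nat.choose (n + 1 + l) l : ℝ)) := by
  have hsummable (k : ℕ) : Summable fun n : ℕ => hh (r - k) (n + 1) /
      (((n + 1 : ℕ) : ℝ) ^ p * (Nat.choose (n + 1 + l) l : ℝ)) := by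
    simpa using (summable_nat_add_iff 1).mpr (summable_hh_div (r - k) l p 0 (by omega))
  refine ⟨(summable_nat_add_iff 1).mpr (summable_hh_div r l p m (by omega)),
    fun k _ => hsummable k, ?_⟩
  set D : ℕ → ℝ := fun n => (n : ℝ) ^ p * (Nat.choose (n + l) l : ℝ)
  calc _ = ∑' n, hh r (n + m + 1 - m) / D (n + m + 1) := tsum_congr fun n => by
          rw [show n + m + 1 - m = n + 1 by omega, show n + m + 1 = n + 1 + m by ring]
    _ = ∑' n, hh r (n + 1 - m) / D (n + 1) :=
        tsum_add_nat_of_eq_zero (f := fun n => hh r (n + 1 - m) / D (n + 1)) m fun n hn => by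
          rw [show n + 1 - m = 0 by omega, hh_zero_right, zero_div]
    _ = ∑' n, ∑ k ∈ range (m + 1),
          (Nat.choose m k : ℝ) * (-1) ^ k * (hh (r - k) (n + 1) / D (n + 1)) := by
        simp_rw [← sum_choose_mul_hh m r, sum_div, mul_div_assoc]
    _ = _ := by
        rw [Summable.tsum_finsetSum fun k _ => ((hsummable k).mul_left _)]
        simp_rw [tsum_mul_left]
end

section
/- Let p ≥ 1 and l ≥ 1 be integers with p + l ≥ 2. Then Σ_{n=1}^∞ 1/(n^p C(n+l,l)) = Σ_{a=1}^l C(l,a) { Σ_{m=1}^{p-1} ((-1)^{a+m}/a^{m-1}) ζ(p+1-m) + ((-1)^{a+p}/a^{p-1}) H_a }. -/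
open Finset

/-!
Partial fractions in `a`, coming from
`∑_{a=0}^{l} (-1)^a C(l,a) / (y + a) = l! / (y (y+1) ⋯ (y+l))`, give
`1 / C(n + l, l) = ∑_{a=1}^{l} (-1)^(a+1) C(l,a) · a / (n + a)`, which reduces the series to
`∑_n a / (n^p (n + a))`. Expanding `a / (x^p (x + a))` in powers of `-x/a` leaves the zeta values
`ζ(p + 1 - m)` and one term `a / (x (x + a)) = 1/x - 1/(x + a)`, whose series telescopes to `H_a`.
-/

open Filter Topology

lemma hasSum_zetaVal {k : ℕ} (hk : 2 ≤ k) :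
    HasSum (fun n : ℕ => 1 / ((n : ℝ) + 1) ^ k) (zetaVal k) := by
  have h := (summable_nat_add_iff 1).mpr (Real.summable_one_div_nat_pow.mpr hk)
  exact (h.congr fun n => by push_cast; rfl).hasSum

lemma Hgen_one_eq_sum_range (a : ℕ) : Hgen 1 a = ∑ i ∈ range a, 1 / ((i : ℝ) + 1) := by
  have h : Hgen 1 a = harmonic a := by simp [Hgen, harmonic_eq_sum_Icc]
  simp [h, harmonic]

lemma hasSum_sub_add_of_antitone {f : ℕ → ℝ} (hf : Antitone f) (hf0 : Tendsto f atTop (𝓝 0))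
    (k : ℕ) : HasSum (fun n => f n - f (n + k)) (∑ i ∈ range k, f i) := by
  rw [hasSum_iff_tendsto_nat_of_nonneg fun n => sub_nonneg.2 (hf (n.le_add_right k))]
  have hpartial : ∀ N, ∑ n ∈ range N, (f n - f (n + k))
      = ∑ i ∈ range k, f i - ∑ i ∈ range k, f (N + i) := by
    intro N
    have h₁ := Finset.sum_range_add f N k
    have h₂ := Finset.sum_range_add f k N
    simp only [Finset.sum_sub_distrib, add_comm _ k] at h₁ h₂ ⊢
    linarith
  have htail : Tendsto (fun N => ∑ i ∈ range k, f (N + i)) atTop (𝓝 0) := by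
    simpa using tendsto_finsetSum (range k) fun i _ => hf0.comp (tendsto_add_atTop_nat i)
  simpa [hpartial] using tendsto_const_nhds.sub htail

lemma hasSum_div_mul_add (a : ℕ) :
    HasSum (fun n : ℕ => (a : ℝ) / (((n : ℝ) + 1) * ((n : ℝ) + 1 + a))) (Hgen 1 a) := by
  have hf : Antitone fun n : ℕ => 1 / ((n : ℝ) + 1) :=
    fun m n hmn => one_div_le_one_div_of_le (by positivity) (by gcongr)
  rw [Hgen_one_eq_sum_range]
  refine (hasSum_sub_add_of_antitone hf tendsto_one_div_add_atTop_nhds_zero_nat a).congr_fun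
    fun n => ?_
  push_cast
  field_simp
  ring

lemma div_pow_mul_add_eq {x a : ℝ} (hx : x ≠ 0) (ha : a ≠ 0) (hxa : x + a ≠ 0) {p : ℕ}
    (hp : 1 ≤ p) :
    a / (x ^ p * (x + a)) =
      ∑ m ∈ Icc 1 (p - 1), (-1) ^ (m + 1) / a ^ (m - 1) * (1 / x ^ (p + 1 - m)) +
        (-1) ^ (p + 1) / a ^ (p - 1) * (a / (x * (x + a))) := by
  induction p, hp using Nat.le_induction with
  | base => simp
  | succ p hp ih =>
    have hshift : ∀ m ∈ Icc 1 (p - 1), (-1) ^ (m + 1) / a ^ (m - 1) * (1 / x ^ (p + 1 + 1 - m))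
        = 1 / x * ((-1) ^ (m + 1) / a ^ (m - 1) * (1 / x ^ (p + 1 - m))) := by
      intro m hm
      rw [show p + 1 + 1 - m = p + 1 - m + 1 by grind]
      ring
    rw [Nat.add_sub_cancel, ← Nat.sub_add_cancel hp, Finset.sum_Icc_succ_top (by omega),
      Nat.sub_add_cancel hp, Finset.sum_congr rfl hshift, ← Finset.mul_sum,
      eq_sub_of_add_eq ih.symm]
    rw [show p + 1 + 1 - p = 2 by omega, show p = p - 1 + 1 by omega]
    simp only [Nat.add_sub_cancel, pow_succ]
    field_simp
    ring

lemma hasSum_div_pow_mul_add {a : ℕ} (ha : a ≠ 0) {p : ℕ} (hp : 1 ≤ p) :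
    HasSum (fun n : ℕ => (a : ℝ) / (((n : ℝ) + 1) ^ p * ((n : ℝ) + 1 + a)))
      (∑ m ∈ Icc 1 (p - 1), (-1) ^ (m + 1) / (a : ℝ) ^ (m - 1) * zetaVal (p + 1 - m) +
        (-1) ^ (p + 1) / (a : ℝ) ^ (p - 1) * Hgen 1 a) := by
  have hzeta : ∀ m ∈ Icc 1 (p - 1), HasSum
      (fun n : ℕ => (-1) ^ (m + 1) / (a : ℝ) ^ (m - 1) * (1 / ((n : ℝ) + 1) ^ (p + 1 - m)))
      ((-1) ^ (m + 1) / (a : ℝ) ^ (m - 1) * zetaVal (p + 1 - m)) :=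
    fun m hm => (hasSum_zetaVal (by grind)).mul_left _
  refine ((hasSum_sum hzeta).add ((hasSum_div_mul_add a).mul_left _)).congr_fun fun n => ?_
  exact div_pow_mul_add_eq (by positivity) (by positivity) (by positivity) hp

lemma sum_range_alternating_choose_div_add (l : ℕ) {y : ℝ} (hy : 0 < y) :
    ∑ a ∈ range (l + 1), (-1) ^ a * (l.choose a : ℝ) / (y + a) =
      l.factorial / ∏ j ∈ range (l + 1), (y + j) := by
  induction l generalizing y with
  | zero => simp
  | succ l ih =>
    have hpascal : ∑ a ∈ range (l + 2), (-1) ^ a * ((l + 1).choose a : ℝ) / (y + a) =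
        ∑ a ∈ range (l + 1), (-1) ^ a * (l.choose a : ℝ) / (y + a) -
          ∑ a ∈ range (l + 1), (-1) ^ a * (l.choose a : ℝ) / (y + 1 + a) := by
      have htop : ∑ a ∈ range (l + 1), (-1) ^ a * (l.choose a : ℝ) / (y + a) =
          ∑ a ∈ range (l + 2), (-1) ^ a * (l.choose a : ℝ) / (y + a) := by
        simp [Finset.sum_range_succ _ (l + 1)]
      have hterm : ∀ a ∈ range (l + 1),
          (-1) ^ (a + 1) * ((l + 1).choose (a + 1) : ℝ) / (y + ↑(a + 1)) =
            (-1) ^ (a + 1) * (l.choose (a + 1) : ℝ) / (y + ↑(a + 1)) -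
              (-1) ^ a * (l.choose a : ℝ) / (y + 1 + a) := by
        intro a _
        rw [Nat.choose_succ_succ']
        push_cast
        ring
      rw [htop, Finset.sum_range_succ', Finset.sum_range_succ' _ (l + 1),
        Finset.sum_congr rfl hterm, Finset.sum_sub_distrib]
      simp only [Nat.choose_zero_right]
      ring
    have hP : ∏ j ∈ range (l + 2), (y + j) = (∏ j ∈ range (l + 1), (y + j)) * (y + (l + 1)) := by
      rw [Finset.prod_range_succ]; push_cast; ring
    have hQ : ∏ j ∈ range (l + 2), (y + j) = y * ∏ j ∈ range (l + 1), (y + 1 + j) := by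
      rw [Finset.prod_range_succ']
      simp only [Nat.cast_add, Nat.cast_one, Nat.cast_zero, add_zero, ← add_assoc, add_right_comm y]
      ring
    have hP0 : ∏ j ∈ range (l + 1), (y + j) ≠ 0 := by positivity
    have hQ0 : ∏ j ∈ range (l + 1), (y + 1 + j) ≠ 0 := by positivity
    rw [hpascal, ih hy, ih (by positivity), Nat.factorial_succ]
    rw [div_sub_div _ _ hP0 hQ0, div_eq_div_iff (mul_ne_zero hP0 hQ0) (by positivity)]
    push_cast
    linear_combination (l.factorial : ℝ) * (∏ j ∈ range (l + 1), (y + 1 + j)) * hP -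
      (l.factorial : ℝ) * (∏ j ∈ range (l + 1), (y + j)) * hQ

lemma one_div_choose_add_eq_sum (n : ℕ) {l : ℕ} (hl : 1 ≤ l) :
    1 / ((n + l).choose l : ℝ) =
      ∑ a ∈ Icc 1 l, (-1) ^ (a + 1) * (l.choose a : ℝ) * (a / ((n : ℝ) + a)) := by
  obtain ⟨k, rfl⟩ : ∃ k, l = k + 1 := ⟨l - 1, by omega⟩
  have hterm : ∀ b ∈ range (k + 1),
      (-1) ^ (1 + b + 1) * ((k + 1).choose (1 + b) : ℝ) * ((1 + b : ℕ) / ((n : ℝ) + (1 + b : ℕ))) =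
        (k + 1) * ((-1) ^ b * (k.choose b : ℝ) / ((n + 1 : ℝ) + b)) := by
    intro b _
    have h : ((k : ℝ) + 1) * k.choose b = (k + 1).choose (1 + b) * ((b : ℝ) + 1) := by
      rw [add_comm 1 b]
      exact_mod_cast Nat.add_one_mul_choose_eq k b
    push_cast
    linear_combination -((-1) ^ b / ((n : ℝ) + 1 + b)) * h
  have hprod : ∏ j ∈ range (k + 1), ((n + 1 : ℝ) + j) =
      (k + 1).factorial * (n + (k + 1)).choose (k + 1) := by
    have h := (Nat.ascFactorial_eq_prod_range (n + 1) (k + 1)).symm.trans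
      (Nat.ascFactorial_eq_factorial_mul_choose n (k + 1))
    exact_mod_cast h
  rw [← Finset.Ico_add_one_right_eq_Icc, Finset.sum_Ico_eq_sum_range, Nat.add_sub_cancel,
    Finset.sum_congr rfl hterm, ← Finset.mul_sum,
    sum_range_alternating_choose_div_add k (by positivity), hprod, Nat.factorial_succ]
  have : ((n + (k + 1)).choose (k + 1) : ℝ) ≠ 0 :=
    Nat.cast_ne_zero.2 (Nat.choose_pos (by omega)).ne'
  push_cast
  field_simp

lemma hasSum_one_div_pow_mul_choose {p l : ℕ} (hp : 1 ≤ p) (hl : 1 ≤ l) :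
    HasSum (fun n : ℕ => 1 / (((n + 1 : ℕ) : ℝ) ^ p * (Nat.choose (n + 1 + l) l : ℝ)))
      (∑ a ∈ Finset.Icc 1 l, (Nat.choose l a : ℝ) *
        ((∑ m ∈ Finset.Icc 1 (p - 1),
            (-1 : ℝ) ^ (a + m) / (a : ℝ) ^ (m - 1) * zetaVal (p + 1 - m)) +
         (-1 : ℝ) ^ (a + p) / (a : ℝ) ^ (p - 1) * Hgen 1 a)) := by
  have hterms : ∀ a ∈ Icc 1 l, HasSum
      (fun n : ℕ => (-1) ^ (a + 1) * (l.choose a : ℝ) *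
        ((a : ℝ) / (((n : ℝ) + 1) ^ p * ((n : ℝ) + 1 + a))))
      ((-1) ^ (a + 1) * (l.choose a : ℝ) *
        (∑ m ∈ Icc 1 (p - 1), (-1) ^ (m + 1) / (a : ℝ) ^ (m - 1) * zetaVal (p + 1 - m) +
          (-1) ^ (p + 1) / (a : ℝ) ^ (p - 1) * Hgen 1 a)) :=
    fun a ha => (hasSum_div_pow_mul_add (by grind) hp).mul_left _
  convert hasSum_sum hterms using 1
  · funext n
    rw [← one_div_mul_one_div, one_div_choose_add_eq_sum (n + 1) hl, Finset.mul_sum]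
    refine Finset.sum_congr rfl fun a _ => ?_
    push_cast
    field_simp
  · refine Finset.sum_congr rfl fun a _ => ?_
    simp only [mul_add, Finset.mul_sum]
    congr 1
    · exact Finset.sum_congr rfl fun m _ => by ring
    · ring

theorem stmt16_general (p l : ℕ) (hp : 1 ≤ p) (hl : 1 ≤ l) :
    ∑' n : ℕ, 1 / (((n + 1 : ℕ) : ℝ) ^ p * (Nat.choose (n + 1 + l) l : ℝ)) =
      ∑ a ∈ Finset.Icc 1 l, (Nat.choose l a : ℝ) *
        ((∑ m ∈ Finset.Icc 1 (p - 1),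
            (-1 : ℝ) ^ (a + m) / (a : ℝ) ^ (m - 1) * zetaVal (p + 1 - m)) +
         (-1 : ℝ) ^ (a + p) / (a : ℝ) ^ (p - 1) * Hgen 1 a) :=
  (hasSum_one_div_pow_mul_choose hp hl).tsum_eq

theorem stmt16 (p l : ℕ) (hp : 1 ≤ p) (hl : 1 ≤ l) (h : 2 ≤ p + l) :
    ∑' n : ℕ, 1 / (((n + 1 : ℕ) : ℝ) ^ p * (Nat.choose (n + 1 + l) l : ℝ)) =
      ∑ a ∈ Finset.Icc 1 l, (Nat.choose l a : ℝ) *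
        ((∑ m ∈ Finset.Icc 1 (p - 1),
            (-1 : ℝ) ^ (a + m) / (a : ℝ) ^ (m - 1) * zetaVal (p + 1 - m)) +
         (-1 : ℝ) ^ (a + p) / (a : ℝ) ^ (p - 1) * Hgen 1 a) :=
  stmt16_general p l hp hl
end
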